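/- Let n, p be positive integers, δ > 0, S̄ ⊆ {1,…,p}, x_1,…,x_n ∈ ℝ^p, and Δ, w̃ ∈ ℝ^p with supp(Δ) ⊆ S̄ and supp(w̃) ⊆ S̄. If the operator norm bound ‖ (1/n) Σ_{j=1}^n (x_jᵀΔ)² x_{j,S̄} x_{j,S̄}ᵀ − (‖Δ‖₂² I_{S̄} + 2ΔΔᵀ) ‖ ≤ δ‖Δ‖₂² holds, then | (1/n) Σ_{j=1}^n (x_jᵀΔ)³ (x_jᵀ w̃) | ≤ (3 + δ) ‖Δ‖₂³ ‖w̃‖₂. -/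

import Mathlib

open MeasureTheory ProbabilityTheory

noncomputable section

/-- Euclidean dot product on `ℝ^p`. -/
def dot {p : ℕ} (u v : Fin p → ℝ) : ℝ := ∑ i, u i * v i

/-- Euclidean norm on `ℝ^p`. -/
def nrm {p : ℕ} (v : Fin p → ℝ) : ℝ := Real.sqrt (∑ i, (v i)^2)

/-- The matrix `‖b‖₂² I + 2 b bᵀ` (population Fisher information / Hessian). -/
def fisherM {p : ℕ} (b : Fin p → ℝ) : Matrix (Fin p) (Fin p) ℝ :=
  (nrm b ^ 2) • (1 : Matrix (Fin p) (Fin p) ℝ) + (2:ℝ) • Matrix.vecMulVec b b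

/-- The correction direction `w_k(b) = -(1/2) (‖b‖₂² I + 2 b bᵀ)⁻¹ e_k`. -/
def wvec {p : ℕ} (b : Fin p → ℝ) (k : Fin p) : Fin p → ℝ :=
  (-(1/2) : ℝ) • (fisherM b)⁻¹.mulVec (Pi.single k 1)

/-- Operator (spectral) norm of a matrix acting on Euclidean space. -/
def opNorm {p : ℕ} (A : Matrix (Fin p) (Fin p) ℝ) : ℝ :=
  ‖LinearMap.toContinuousLinearMap (Matrix.toEuclideanLin A)‖

/-- Restriction of a vector to a coordinate set `S` (zero outside `S`). -/
def restr {p : ℕ} (S : Finset (Fin p)) (v : Fin p → ℝ) : Fin p → ℝ :=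
  fun i => if i ∈ S then v i else 0

/-- Gradient of the phase-retrieval objective
`f(b) = (1/(4n)) ∑ⱼ ((xⱼᵀb)² - yⱼ)²`, namely
`∇f(b) = (1/n) ∑ⱼ ((xⱼᵀb)² - yⱼ)(xⱼᵀb) xⱼ`. -/
def gradf {p n : ℕ} (x : Fin n → Fin p → ℝ) (y : Fin n → ℝ) (b : Fin p → ℝ) : Fin p → ℝ :=
  (1/(n:ℝ)) • ∑ j, (((dot (x j) b)^2 - y j) * dot (x j) b) • x j

open Matrix

/-! The empirical-Hessian event controls the bilinear form `Δᵀ A w̃` of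
`A = (1/n) ∑ⱼ (xⱼᵀΔ)² x_{j,S̄} x_{j,S̄}ᵀ`, which (as `Δ` and `w̃` live on `S̄`) is exactly the cubic
sum. Against the population matrix `M = ‖Δ‖² I_{S̄} + 2ΔΔᵀ` the same form is `3‖Δ‖²⟨Δ, w̃⟩`, so
`|Δᵀ A w̃| ≤ ‖A - M‖ ‖Δ‖ ‖w̃‖ + 3‖Δ‖³‖w̃‖` by Cauchy–Schwarz. -/

section Euclidean

variable {p : ℕ}

lemma dot_eq_dotProduct (u v : Fin p → ℝ) : dot u v = u ⬝ᵥ v := rfl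

lemma nrm_eq_norm_toLp (v : Fin p → ℝ) : nrm v = ‖WithLp.toLp 2 v‖ := by
  simp [nrm, EuclideanSpace.norm_eq, Real.norm_eq_abs, sq_abs]

lemma nrm_nonneg (v : Fin p → ℝ) : 0 ≤ nrm v := Real.sqrt_nonneg _

lemma nrm_sq (v : Fin p → ℝ) : nrm v ^ 2 = v ⬝ᵥ v := by
  rw [nrm, Real.sq_sqrt (Finset.sum_nonneg fun i _ => sq_nonneg _)]
  simp [dotProduct, sq]

lemma abs_dotProduct_le_nrm_mul_nrm (u v : Fin p → ℝ) : |u ⬝ᵥ v| ≤ nrm u * nrm v := by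
  have h := abs_real_inner_le_norm (WithLp.toLp 2 v) (WithLp.toLp 2 u)
  rwa [EuclideanSpace.inner_eq_star_dotProduct, ← nrm_eq_norm_toLp, ← nrm_eq_norm_toLp,
    mul_comm] at h

lemma abs_dotProduct_mulVec_le_opNorm (A : Matrix (Fin p) (Fin p) ℝ) (u v : Fin p → ℝ) :
    |u ⬝ᵥ A *ᵥ v| ≤ opNorm A * nrm u * nrm v := by
  set T := LinearMap.toContinuousLinearMap (Matrix.toEuclideanLin A)
  have hT : ‖T (WithLp.toLp 2 v)‖ = nrm (A *ᵥ v) := by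
    rw [nrm_eq_norm_toLp]; rfl
  calc |u ⬝ᵥ A *ᵥ v| ≤ nrm u * nrm (A *ᵥ v) := abs_dotProduct_le_nrm_mul_nrm _ _
    _ ≤ nrm u * (opNorm A * nrm v) := by
        refine mul_le_mul_of_nonneg_left ?_ (nrm_nonneg u)
        rw [← hT, nrm_eq_norm_toLp v]
        exact T.le_opNorm _
    _ = opNorm A * nrm u * nrm v := by ring

lemma dotProduct_vecMulVec_mulVec (u a b v : Fin p → ℝ) :
    u ⬝ᵥ vecMulVec a b *ᵥ v = (u ⬝ᵥ a) * (b ⬝ᵥ v) := by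
  rw [vecMulVec_mulVec, op_smul_eq_smul, dotProduct_smul, smul_eq_mul, mul_comm]

end Euclidean

section Restriction

variable {p : ℕ} (S : Finset (Fin p))

lemma restr_eq_self {v : Fin p → ℝ} (hv : Function.support v ⊆ (S : Set (Fin p))) :
    restr S v = v := by
  funext i
  by_cases hi : i ∈ S
  · simp [restr, hi]
  · simp [restr, hi, Function.notMem_support.mp fun h => hi (hv h)]

lemma dotProduct_restr (u v : Fin p → ℝ) : u ⬝ᵥ restr S v = restr S u ⬝ᵥ v := by
  refine Finset.sum_congr rfl fun i _ => ?_
  by_cases hi : i ∈ S <;> simp [restr, hi]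

lemma diagonal_indicator_mulVec (v : Fin p → ℝ) :
    diagonal (fun i => if i ∈ S then (1 : ℝ) else 0) *ᵥ v = restr S v := by
  funext i
  rw [mulVec_diagonal]
  by_cases hi : i ∈ S <;> simp [restr, hi]

lemma dotProduct_sum_smul_vecMulVec_restr_mulVec {n : ℕ} (x : Fin n → Fin p → ℝ)
    (c : Fin n → ℝ) {u v : Fin p → ℝ} (hu : Function.support u ⊆ (S : Set (Fin p)))
    (hv : Function.support v ⊆ (S : Set (Fin p))) :
    u ⬝ᵥ (∑ j, c j • vecMulVec (restr S (x j)) (restr S (x j))) *ᵥ v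
      = ∑ j, c j * (x j ⬝ᵥ u) * (x j ⬝ᵥ v) := by
  rw [sum_mulVec, dotProduct_sum]
  refine Finset.sum_congr rfl fun j _ => ?_
  rw [smul_mulVec, dotProduct_smul, dotProduct_vecMulVec_mulVec, dotProduct_restr,
    restr_eq_self S hu, dotProduct_comm (restr S _), dotProduct_restr, restr_eq_self S hv,
    smul_eq_mul, dotProduct_comm u, dotProduct_comm v, mul_assoc]

lemma dotProduct_restrictedFisher_mulVec (b : Fin p → ℝ) {v : Fin p → ℝ}
    (hv : Function.support v ⊆ (S : Set (Fin p))) :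
    b ⬝ᵥ (nrm b ^ 2 • diagonal (fun i => if i ∈ S then (1 : ℝ) else 0)
        + (2 : ℝ) • vecMulVec b b) *ᵥ v = 3 * nrm b ^ 2 * (b ⬝ᵥ v) := by
  rw [add_mulVec, smul_mulVec, smul_mulVec, diagonal_indicator_mulVec, restr_eq_self S hv,
    dotProduct_add, dotProduct_smul, dotProduct_smul, dotProduct_vecMulVec_mulVec, ← nrm_sq,
    smul_eq_mul, smul_eq_mul]
  ring

end Restriction

theorem stmt_13_general {n p : ℕ} (δ : ℝ) (Sb : Finset (Fin p))
    (x : Fin n → Fin p → ℝ) (Δ wt : Fin p → ℝ)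
    (hΔS : Function.support Δ ⊆ (Sb : Set (Fin p)))
    (hwS : Function.support wt ⊆ (Sb : Set (Fin p)))
    (hop : opNorm ((1/(n:ℝ)) • ∑ j, (dot (x j) Δ ^ 2) •
          Matrix.vecMulVec (restr Sb (x j)) (restr Sb (x j))
        - ((nrm Δ ^ 2) • Matrix.diagonal (fun i => if i ∈ Sb then (1:ℝ) else 0)
            + (2:ℝ) • Matrix.vecMulVec Δ Δ))
      ≤ δ * nrm Δ ^ 2) :
    |(1/(n:ℝ)) * ∑ j, dot (x j) Δ ^ 3 * dot (x j) wt|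
      ≤ (3 + δ) * nrm Δ ^ 3 * nrm wt := by
  set A : Matrix (Fin p) (Fin p) ℝ := (1/(n:ℝ)) • ∑ j, (dot (x j) Δ ^ 2) •
    Matrix.vecMulVec (restr Sb (x j)) (restr Sb (x j))
  set M : Matrix (Fin p) (Fin p) ℝ :=
    (nrm Δ ^ 2) • Matrix.diagonal (fun i => if i ∈ Sb then (1:ℝ) else 0)
      + (2:ℝ) • Matrix.vecMulVec Δ Δ
  have hA : Δ ⬝ᵥ A *ᵥ wt = (1/(n:ℝ)) * ∑ j, dot (x j) Δ ^ 3 * dot (x j) wt := by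
    rw [smul_mulVec, dotProduct_smul,
      dotProduct_sum_smul_vecMulVec_restr_mulVec Sb x _ hΔS hwS, smul_eq_mul]
    exact congrArg _ (Finset.sum_congr rfl fun j _ => by simp only [dot_eq_dotProduct]; ring)
  have hM : Δ ⬝ᵥ M *ᵥ wt = 3 * nrm Δ ^ 2 * (Δ ⬝ᵥ wt) :=
    dotProduct_restrictedFisher_mulVec Sb Δ hwS
  rw [← hA, ← sub_add_cancel A M, add_mulVec, dotProduct_add, hM]
  calc |Δ ⬝ᵥ (A - M) *ᵥ wt + 3 * nrm Δ ^ 2 * (Δ ⬝ᵥ wt)|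
      ≤ |Δ ⬝ᵥ (A - M) *ᵥ wt| + 3 * nrm Δ ^ 2 * |Δ ⬝ᵥ wt| :=
        (abs_add_le _ _).trans_eq (by
          rw [abs_mul (3 * nrm Δ ^ 2), abs_of_nonneg (by positivity : (0 : ℝ) ≤ 3 * nrm Δ ^ 2)])
    _ ≤ δ * nrm Δ ^ 2 * nrm Δ * nrm wt + 3 * nrm Δ ^ 2 * (nrm Δ * nrm wt) := by
        have := nrm_nonneg Δ
        have := nrm_nonneg wt
        gcongr
        · exact (abs_dotProduct_mulVec_le_opNorm _ _ _).trans (by gcongr)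
        · exact abs_dotProduct_le_nrm_mul_nrm _ _
    _ = (3 + δ) * nrm Δ ^ 3 * nrm wt := by ring

/-- Deterministic bound on the cubic error term, conditional on the
empirical-Hessian concentration event for `Δ`:
`|(1/n) ∑ⱼ (xⱼᵀΔ)³(xⱼᵀw̃)| ≤ (3 + δ)‖Δ‖₂³‖w̃‖₂`. -/
theorem stmt_13 {n p : ℕ} (hn : 0 < n) (δ : ℝ) (hδ : 0 < δ) (Sb : Finset (Fin p))
    (x : Fin n → Fin p → ℝ) (Δ wt : Fin p → ℝ)
    (hΔS : Function.support Δ ⊆ (Sb : Set (Fin p)))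
    (hwS : Function.support wt ⊆ (Sb : Set (Fin p)))
    (hop : opNorm ((1/(n:ℝ)) • ∑ j, (dot (x j) Δ ^ 2) •
          Matrix.vecMulVec (restr Sb (x j)) (restr Sb (x j))
        - ((nrm Δ ^ 2) • Matrix.diagonal (fun i => if i ∈ Sb then (1:ℝ) else 0)
            + (2:ℝ) • Matrix.vecMulVec Δ Δ))
      ≤ δ * nrm Δ ^ 2) :
    |(1/(n:ℝ)) * ∑ j, dot (x j) Δ ^ 3 * dot (x j) wt|
      ≤ (3 + δ) * nrm Δ ^ 3 * nrm wt :=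
  stmt_13_general δ Sb x Δ wt hΔS hwS hop
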